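/- arXiv:2603.17154 — 3 statements merged into one kernel-verified Lean document; each statement's English description precedes it below -/
import Mathlib

section
/- Let q be a prime power, let G ∈ F_q^{k×n} be a matrix of rank k, let s_1, s_2 ≥ 1 with s_1 + s_2 = k, and let s* be an integer with max(s_1,s_2) ≤ s* ≤ k−1. Define A_i(s*) = Σ_{s=s_i}^{s*} n/(n−s) for i ∈ {1,2} and B(s*) = n·H_n − Σ_{s=s*+1}^{n−1} n/(n−s). Then E_1(G)/A_1(s*) + E_2(G)/A_2(s*) ≥ B(s*)/A_1(s*) + B(s*)/A_2(s*) − 1. -/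
/-!
Write `ρ_V(s) = α_V(s) / C(n,s)` for the fraction of `s`-sets of columns whose span contains `V`.
These sets form an up-set, so the local LYM inequality makes `ρ_V` nondecreasing. Since
`α_V(s) / C(n-1,s) = ρ_V(s) · n/(n-s)`, `α_V(s) ≤ C(n,s)` and `α_V(s) = 0` for `s < dim V`, this
gives `B(s*) - E(V) ≤ ρ_V(s*) · A_i(s*)` whenever `s_i ≤ dim V`. Finally `F₁ + F₂ = F^k`, so for
`s* < k` no `s*`-set spans both files and `ρ_{F₁}(s*) + ρ_{F₂}(s*) ≤ 1`; dividing by `A_i(s*)`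
and adding yields the bound.
-/

open Finset

/-- The `r`-th harmonic number `H_r = ∑_{i=1}^r 1/i`, as a real number (`H_0 = 0`). -/
noncomputable def harm (r : ℕ) : ℝ := ∑ i ∈ Finset.range r, (1 : ℝ) / (i + 1)

/-- The span of the columns of `G` indexed by the subset `S ⊆ {1,…,n}`. -/
noncomputable def colSpan (F : Type*) [Field F] {k n : ℕ}
    (G : Matrix (Fin k) (Fin n) F) (S : Finset (Fin n)) : Submodule F (Fin k → F) :=
  Submodule.span F ((fun j => fun i => G i j) '' (S : Set (Fin n)))

/-- `α_V(s)`: the number of `s`-element subsets `S ⊆ {1,…,n}` whose columns span a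
subspace containing the target subspace `V`. -/
noncomputable def alphaCount (F : Type*) [Field F] {k n : ℕ}
    (G : Matrix (Fin k) (Fin n) F) (V : Submodule F (Fin k → F)) (s : ℕ) : ℕ :=
  Nat.card {S : Finset (Fin n) // S.card = s ∧ V ≤ colSpan F G S}

/-- The first file subspace `F₁ = span(e_1, …, e_{s₁}) ⊆ F_q^k`. -/
noncomputable def file1 (F : Type*) [Field F] (k s1 : ℕ) : Submodule F (Fin k → F) :=
  Submodule.span F {v : Fin k → F | ∃ i : Fin k, (i : ℕ) < s1 ∧ v = Pi.single i 1}

/-- The second file subspace `F₂ = span(e_{s₁+1}, …, e_k) ⊆ F_q^k`. -/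
noncomputable def file2 (F : Type*) [Field F] (k s1 : ℕ) : Submodule F (Fin k → F) :=
  Submodule.span F {v : Fin k → F | ∃ i : Fin k, s1 ≤ (i : ℕ) ∧ v = Pi.single i 1}

/-- The expected retrieval time `E(G, V) = n·H_n − ∑_{s=1}^{n−1} α_V(s)/C(n−1,s)`. -/
noncomputable def Etime (F : Type*) [Field F] {k n : ℕ}
    (G : Matrix (Fin k) (Fin n) F) (V : Submodule F (Fin k → F)) : ℝ :=
  (n : ℝ) * harm n -
    ∑ s ∈ Finset.Icc 1 (n - 1), (alphaCount F G V s : ℝ) / ((n - 1).choose s : ℝ)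

/-- `A_i(s*) = ∑_{s=s_i}^{s*} n/(n−s)`. -/
noncomputable def Acut (n si sstar : ℕ) : ℝ :=
  ∑ s ∈ Finset.Icc si sstar, (n : ℝ) / ((n : ℝ) - s)

/-- `B(s*) = n·H_n − ∑_{s=s*+1}^{n−1} n/(n−s)`. -/
noncomputable def Bcut (n sstar : ℕ) : ℝ :=
  (n : ℝ) * harm n - ∑ s ∈ Finset.Icc (sstar + 1) (n - 1), (n : ℝ) / ((n : ℝ) - s)

open scoped FinsetFamily

section UpperFamily
variable {α : Type*} [Fintype α] [DecidableEq α] {𝒰 : Finset (Finset α)}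

theorem card_slice_div_choose_le_succ (h𝒰 : IsUpperSet (𝒰 : Set (Finset α))) {s : ℕ}
    (hs : s < Fintype.card α) :
    (#(𝒰 # s) : ℝ) / (Fintype.card α).choose s
      ≤ #(𝒰 # (s + 1)) / (Fintype.card α).choose (s + 1) := by
  set n := Fintype.card α
  -- Complementation turns the up-set into a down-set, where the local LYM inequality applies.
  have hsized : ((𝒰 # s)ᶜˢ : Set (Finset α)).Sized (n - s) := by
    intro A hA
    rw [mem_coe, mem_compls] at hA
    rw [← (mem_slice.1 hA).2, card_compl, Nat.sub_sub_self (card_le_univ A)]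
  have hup : ∂⁺ (𝒰 # s) ⊆ 𝒰 # (s + 1) := by
    intro A hA
    obtain ⟨B, hB, hBA, hcard⟩ := mem_upShadow_iff_exists_mem_card_add_one.1 hA
    rw [mem_slice] at hB ⊢
    exact ⟨h𝒰 hBA hB.1, hcard.trans (by rw [hB.2])⟩
  have hlym := local_lubell_yamamoto_meshalkin_inequality_div (𝕜 := ℝ) (by omega) hsized
  rw [card_compls, shadow_compls, card_compls, Nat.choose_symm hs.le,
    Nat.choose_symm_of_eq_add (show n = n - s - 1 + (s + 1) by omega)] at hlym
  exact hlym.trans (by gcongr)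

theorem card_slice_div_choose_mono (h𝒰 : IsUpperSet (𝒰 : Set (Finset α))) {s t : ℕ}
    (hst : s ≤ t) (ht : t ≤ Fintype.card α) :
    (#(𝒰 # s) : ℝ) / (Fintype.card α).choose s ≤ #(𝒰 # t) / (Fintype.card α).choose t := by
  induction t, hst using Nat.le_induction with
  | base => rfl
  | succ t _ ih => exact (ih (by omega)).trans (card_slice_div_choose_le_succ h𝒰 ht)

end UpperFamily

section Spanning
variable {F : Type*} [Field F] {k n : ℕ} (G : Matrix (Fin k) (Fin n) F)

theorem colSpan_mono {S T : Finset (Fin n)} (h : S ⊆ T) : colSpan F G S ≤ colSpan F G T :=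
  Submodule.span_mono (Set.image_mono (coe_subset.mpr h))

theorem finrank_colSpan_le (S : Finset (Fin n)) : Module.finrank F (colSpan F G S) ≤ #S := by
  classical
  have h : colSpan F G S = Submodule.span F (S.image fun j i => G i j : Set (Fin k → F)) := by
    rw [coe_image]; rfl
  rw [h]
  exact (finrank_span_finset_le_card _).trans card_image_le

open Classical in
noncomputable def spanningSets (V : Submodule F (Fin k → F)) : Finset (Finset (Fin n)) :=
  {S | V ≤ colSpan F G S}

variable (V W : Submodule F (Fin k → F))

theorem isUpperSet_spanningSets : IsUpperSet (spanningSets G V : Set (Finset (Fin n))) := by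
  intro S T hST hS
  simp only [spanningSets, coe_filter, mem_univ, true_and, Set.mem_ofPred_eq] at hS ⊢
  exact hS.trans (colSpan_mono G hST)

theorem alphaCount_eq_card_slice (s : ℕ) : alphaCount F G V s = #((spanningSets G V) # s) := by
  classical
  rw [alphaCount, Nat.card_eq_fintype_card, Fintype.card_subtype]
  congr 1
  ext S
  simp [spanningSets, mem_slice, and_comm]

theorem alphaCount_le_choose (s : ℕ) : alphaCount F G V s ≤ n.choose s := by
  simpa [alphaCount_eq_card_slice] using (sized_slice (𝒜 := spanningSets G V) (r := s)).card_le

theorem alphaCount_eq_zero_of_lt_finrank {s : ℕ} (hs : s < Module.finrank F V) :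
    alphaCount F G V s = 0 := by
  rw [alphaCount_eq_card_slice, card_eq_zero, eq_empty_iff_forall_notMem]
  intro S hS
  simp only [mem_slice, spanningSets, mem_filter, mem_univ, true_and] at hS
  have := (Submodule.finrank_mono hS.1).trans (finrank_colSpan_le G S)
  omega

theorem alphaCount_div_choose_mono {s t : ℕ} (hst : s ≤ t) (ht : t ≤ n) :
    (alphaCount F G V s : ℝ) / n.choose s ≤ (alphaCount F G V t : ℝ) / n.choose t := by
  simpa [alphaCount_eq_card_slice] using
    card_slice_div_choose_mono (isUpperSet_spanningSets G V) hst (by simpa using ht)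

theorem alphaCount_add_alphaCount_le_choose (hVW : V ⊔ W = ⊤) {s : ℕ} (hs : s < k) :
    alphaCount F G V s + alphaCount F G W s ≤ n.choose s := by
  classical
  have hdisj : Disjoint ((spanningSets G V) # s) ((spanningSets G W) # s) := by
    rw [disjoint_left]
    intro S hV hW
    simp only [mem_slice, spanningSets, mem_filter, mem_univ, true_and] at hV hW
    have htop : colSpan F G S = ⊤ := top_unique (hVW ▸ sup_le hV.1 hW.1)
    have := finrank_colSpan_le G S
    rw [htop, finrank_top, Module.finrank_fin_fun] at this
    omega
  have hsized : (↑((spanningSets G V) # s ∪ (spanningSets G W) # s) : Set (Finset (Fin n))).Sized s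
      := coe_union (α := Finset (Fin n)) _ _ ▸ Set.sized_union.2 ⟨sized_slice, sized_slice⟩
  simpa [alphaCount_eq_card_slice, ← card_union_of_disjoint hdisj] using hsized.card_le

end Spanning

section Files
variable (F : Type*) [Field F] {k : ℕ}

theorem finrank_span_single_eq_card (P : Fin k → Prop) [DecidablePred P] :
    Module.finrank F (Submodule.span F {v : Fin k → F | ∃ i, P i ∧ v = Pi.single i 1})
      = #{i | P i} := by
  have hset : {v : Fin k → F | ∃ i, P i ∧ v = Pi.single i 1}
      = Set.range (Pi.basisFun F (Fin k) ∘ ((↑) : {i // P i} → Fin k)) := by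
    ext v
    simp [eq_comm]
  rw [hset, finrank_span_eq_card ((Pi.basisFun F (Fin k)).linearIndependent.comp _
    Subtype.val_injective), Fintype.card_subtype]

theorem finrank_file1 {s1 : ℕ} (hs1 : s1 ≤ k) : Module.finrank F (file1 F k s1) = s1 := by
  classical
  rw [file1, finrank_span_single_eq_card, Fin.card_filter_val_lt, min_eq_right hs1]

theorem finrank_file2 (s1 : ℕ) : Module.finrank F (file2 F k s1) = k - s1 := by
  classical
  rw [file2, finrank_span_single_eq_card]
  simp_rw [← not_lt]
  rw [filter_not, card_sdiff_of_subset (filter_subset _ _), Fin.card_filter_val_lt, card_univ,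
    Fintype.card_fin]
  omega

theorem file1_sup_file2 (s1 : ℕ) : file1 F k s1 ⊔ file2 F k s1 = ⊤ := by
  rw [eq_top_iff, ← (Pi.basisFun F (Fin k)).span_eq, Submodule.span_le]
  rintro v ⟨i, rfl⟩
  rw [Pi.basisFun_apply]
  by_cases h : (i : ℕ) < s1
  · exact Submodule.mem_sup_left (Submodule.subset_span ⟨i, h, rfl⟩)
  · exact Submodule.mem_sup_right (Submodule.subset_span ⟨i, not_lt.1 h, rfl⟩)

end Files

theorem div_choose_pred_eq {n s : ℕ} (hs : s < n) (a : ℝ) :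
    a / ((n - 1).choose s : ℝ) = a / n.choose s * (n / (n - s)) := by
  obtain ⟨m, rfl⟩ : ∃ m, n = m + 1 := ⟨n - 1, by omega⟩
  have hid : (m.choose s : ℝ) * (m + 1) = (m + 1).choose s * ((m + 1 : ℕ) - s : ℝ) := by
    rw [← Nat.cast_sub hs.le]
    exact_mod_cast Nat.choose_mul_succ_eq m s
  have hm : (0 : ℝ) < m.choose s := by exact_mod_cast Nat.choose_pos (by omega)
  have hm1 : (0 : ℝ) < (m + 1).choose s := by exact_mod_cast Nat.choose_pos hs.le
  have hsub : (0 : ℝ) < (m + 1 : ℕ) - s := sub_pos.2 (by exact_mod_cast hs)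
  rw [Nat.add_sub_cancel, div_mul_div_comm, eq_div_iff (mul_pos hm1 hsub).ne', div_mul_eq_mul_div,
    div_eq_iff hm.ne']
  push_cast at hid ⊢
  linear_combination -a * hid

theorem Acut_pos {n si sstar : ℕ} (hsi : si ≤ sstar) (hsn : sstar < n) : 0 < Acut n si sstar := by
  refine sum_pos (fun s hs => ?_) (nonempty_Icc.mpr hsi)
  have : (s : ℝ) < n := by exact_mod_cast (mem_Icc.1 hs).2.trans_lt hsn
  exact div_pos (by linarith [s.cast_nonneg (α := ℝ)]) (by linarith)

section RetrievalTime
variable {F : Type*} [Field F] {k n : ℕ} (G : Matrix (Fin k) (Fin n) F)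
  (V : Submodule F (Fin k → F))

theorem Bcut_sub_Etime_le {si sstar : ℕ} (hsi : si ≤ Module.finrank F V) (hsn : sstar < n) :
    Bcut n sstar - Etime F G V
      ≤ (alphaCount F G V sstar : ℝ) / n.choose sstar * Acut n si sstar := by
  set term : ℕ → ℝ := fun s => (alphaCount F G V s : ℝ) / ((n - 1).choose s : ℝ)
  set w : ℕ → ℝ := fun s => (n : ℝ) / ((n : ℝ) - s)
  have hw : ∀ s < n, 0 ≤ w s := fun s hs => by
    have : (s : ℝ) < n := by exact_mod_cast hs
    exact div_nonneg (by positivity) (by linarith)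
  have hterm : ∀ s < n, term s = (alphaCount F G V s : ℝ) / n.choose s * w s :=
    fun s hs => div_choose_pred_eq hs _
  have head : ∑ s ∈ Icc 1 sstar, term s
      ≤ (alphaCount F G V sstar : ℝ) / n.choose sstar * Acut n si sstar := calc
    _ ≤ ∑ s ∈ Icc 0 sstar, term s :=
        sum_le_sum_of_subset_of_nonneg (Icc_subset_Icc_left zero_le_one) fun _ _ _ => by positivity
    _ = ∑ s ∈ Icc si sstar, term s := by
        refine (sum_subset (Icc_subset_Icc_left (Nat.zero_le _)) fun s hs hs' => ?_).symm
        have : s < si := by simp only [mem_Icc] at hs hs'; omega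
        simp [term, alphaCount_eq_zero_of_lt_finrank G V (this.trans_le hsi)]
    _ ≤ ∑ s ∈ Icc si sstar, (alphaCount F G V sstar : ℝ) / n.choose sstar * w s := by
        refine sum_le_sum fun s hs => ?_
        have hs' := mem_Icc.1 hs
        rw [hterm s (by omega)]
        exact mul_le_mul_of_nonneg_right (alphaCount_div_choose_mono G V hs'.2 hsn.le)
          (hw s (by omega))
    _ = _ := (mul_sum _ _ _).symm
  have tail : ∑ s ∈ Icc (sstar + 1) (n - 1), term s ≤ ∑ s ∈ Icc (sstar + 1) (n - 1), w s := by
    refine sum_le_sum fun s hs => ?_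
    have hs' : s < n := by simp only [mem_Icc] at hs; omega
    rw [hterm s hs']
    refine mul_le_of_le_one_left (hw s hs') ?_
    rw [div_le_one (by exact_mod_cast Nat.choose_pos hs'.le)]
    exact_mod_cast alphaCount_le_choose G V s
  have split : ∑ s ∈ Icc 1 (n - 1), term s
      = ∑ s ∈ Icc 1 sstar, term s + ∑ s ∈ Icc (sstar + 1) (n - 1), term s := by
    have hIoc : ∀ m, Icc 1 m = Ioc 0 m := Icc_add_one_left_eq_Ioc 0
    rw [hIoc, hIoc, Icc_add_one_left_eq_Ioc, sum_Ioc_consecutive _ (Nat.zero_le _) (by omega)]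
  rw [Bcut, Etime]
  linarith

end RetrievalTime

theorem div_sub_le_div_of_sub_le_mul {a b c r : ℝ} (hc : 0 < c) (h : a - b ≤ r * c) :
    a / c - r ≤ b / c := by
  rw [div_sub' hc.ne']
  exact div_le_div_of_nonneg_right (by linarith) hc.le

theorem stmt4_general (k n s1 s2 : ℕ)
    (F : Type*) [Field F]
    (G : Matrix (Fin k) (Fin n) F) (hrank : G.rank = k)
    (hs1 : 1 ≤ s1) (hk : s1 + s2 = k)
    (sstar : ℕ) (hlo : max s1 s2 ≤ sstar) (hhi : sstar ≤ k - 1) :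
    Etime F G (file1 F k s1) / Acut n s1 sstar + Etime F G (file2 F k s1) / Acut n s2 sstar ≥
      Bcut n sstar / Acut n s1 sstar + Bcut n sstar / Acut n s2 sstar - 1 := by
  obtain ⟨hs1le, hs2le⟩ := max_le_iff.1 hlo
  have hsk : sstar < k := by omega
  have hsn : sstar < n := hsk.trans_le (hrank ▸ G.rank_le_width)
  have h1 := Bcut_sub_Etime_le G (file1 F k s1) (finrank_file1 F (by omega)).ge hsn
  have h2 := Bcut_sub_Etime_le (si := s2) G (file2 F k s1) (by rw [finrank_file2]; omega) hsn
  have hρ : (alphaCount F G (file1 F k s1) sstar : ℝ) / n.choose sstar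
      + (alphaCount F G (file2 F k s1) sstar : ℝ) / n.choose sstar ≤ 1 := by
    rw [← add_div, div_le_one (by exact_mod_cast Nat.choose_pos hsn.le)]
    exact_mod_cast alphaCount_add_alphaCount_le_choose G _ _ (file1_sup_file2 F s1) hsk
  linarith [div_sub_le_div_of_sub_le_mul (Acut_pos hs1le hsn) h1,
    div_sub_le_div_of_sub_le_mul (Acut_pos hs2le hsn) h2]

/-- The combinatorial cut: for `max(s₁,s₂) ≤ s* ≤ k−1`,
`E₁/A₁(s*) + E₂/A₂(s*) ≥ B(s*)/A₁(s*) + B(s*)/A₂(s*) − 1`. -/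
theorem stmt4 (q k n s1 s2 : ℕ) (hq : IsPrimePow q)
    (F : Type*) [Field F] [Fintype F] (hF : Fintype.card F = q)
    (G : Matrix (Fin k) (Fin n) F) (hrank : G.rank = k)
    (hs1 : 1 ≤ s1) (hs2 : 1 ≤ s2) (hk : s1 + s2 = k)
    (sstar : ℕ) (hlo : max s1 s2 ≤ sstar) (hhi : sstar ≤ k - 1) :
    Etime F G (file1 F k s1) / Acut n s1 sstar + Etime F G (file2 F k s1) / Acut n s2 sstar ≥
      Bcut n sstar / Acut n s1 sstar + Bcut n sstar / Acut n s2 sstar - 1 :=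
  stmt4_general k n s1 s2 F G hrank hs1 hk sstar hlo hhi
end

section
/- Let q be a prime power, let G ∈ F_q^{k×n} be a matrix of rank k with columns g_1,…,g_n, and let s_1, s_2 ≥ 1 with s_1 + s_2 = k. Then s_1/E_1(G) + s_2/E_2(G) ≤ 2 − (N(F_1) + N(F_2))/n, where N(F_i) is the number of columns of G contained in F_i. -/
/-!
Let `M` be the set of columns of `G` outside `F₂`. Killing the coordinates of `F₂` shows that
every set of columns spanning `F₁` contains at least `s₁` columns from `M`. Now `E₁` is the
expected number of uniform draws with replacement from the `n` columns until the drawn ones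
span `F₁`: when `s` distinct columns have been seen, the next new one takes `n / (n - s)`
draws on average. Hence `E₁` is at least the expected time to see `s₁` distinct columns of
`M`, namely `∑_{t < s₁} n / (|M| - t) ≥ n s₁ / |M|`, so `s₁ / E₁ ≤ 1 - N(F₂) / n`.
Adding the symmetric bound for `F₂` gives the theorem.
-/

open Finset

/-- `N(W)`: the number of columns of `G` contained in the subspace `W`. -/
noncomputable def Ncount (F : Type*) [Field F] {k n : ℕ}
    (G : Matrix (Fin k) (Fin n) F) (W : Submodule F (Fin k → F)) : ℕ :=
  Nat.card {j : Fin n // (fun i => G i j) ∈ W}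

section Combinatorics

variable {α : Type*} [DecidableEq α] (M : Finset α)

theorem card_insert_inter_of_notMem {S : Finset α} {j : α} (hj : j ∉ S) :
    #(insert j S ∩ M) = if j ∈ M then #(S ∩ M) + 1 else #(S ∩ M) := by
  split_ifs with hjM
  · rw [insert_inter_of_mem hjM, card_insert_of_notMem (by simp [hj])]
  · rw [insert_inter_of_notMem hjM]

variable [Fintype α]

/- The bijection is `(S, j) ↦ (insert j S, j)`: adding `j ∉ S` keeps `#(S ∩ M) ≤ t` unless
`j ∈ M` and `#(S ∩ M) = t`. -/
theorem card_sigma_compl_filter_eq_card_sigma (s t : ℕ) :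
    #{x ∈ ({S ∈ powersetCard s univ | #(S ∩ M) ≤ t} : Finset (Finset α)).sigma compl |
        ¬(x.2 ∈ M ∧ #(x.1 ∩ M) = t)} =
      #(({S ∈ powersetCard (s + 1) univ | #(S ∩ M) ≤ t} : Finset (Finset α)).sigma id) := by
  refine card_nbij' (fun x => ⟨insert x.2 x.1, x.2⟩) (fun x => ⟨x.1.erase x.2, x.2⟩)
    ?_ ?_ ?_ ?_
  · rintro ⟨S, j⟩ h
    simp only [coe_filter, mem_sigma, mem_filter, mem_powersetCard_univ, mem_compl,
      Set.mem_ofPred_eq, coe_sigma, Set.mem_sigma_iff, mem_coe, id] at h ⊢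
    obtain ⟨⟨⟨hS, hSM⟩, hj⟩, hjt⟩ := h
    refine ⟨⟨by rw [card_insert_of_notMem hj, hS], ?_⟩, mem_insert_self j S⟩
    rw [card_insert_inter_of_notMem M hj]
    split_ifs with hjM
    · exact Nat.lt_of_le_of_ne hSM fun h => hjt ⟨hjM, h⟩
    · exact hSM
  · rintro ⟨S, j⟩ h
    simp only [coe_filter, mem_sigma, mem_filter, mem_powersetCard_univ, mem_compl,
      Set.mem_ofPred_eq, coe_sigma, Set.mem_sigma_iff, mem_coe, id] at h ⊢
    obtain ⟨⟨hS, hSM⟩, hj⟩ := h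
    have hcard := card_insert_inter_of_notMem M (notMem_erase j S)
    rw [insert_erase hj] at hcard
    refine ⟨⟨⟨by rw [card_erase_of_mem hj, hS]; rfl, ?_⟩, notMem_erase j S⟩, ?_⟩
    · split_ifs at hcard <;> omega
    · rintro ⟨hjM, hjt⟩
      rw [if_pos hjM] at hcard
      omega
  · rintro ⟨S, j⟩ h
    simp only [coe_filter, mem_sigma, mem_compl, Set.mem_ofPred_eq] at h
    simp [erase_insert h.1.2]
  · rintro ⟨S, j⟩ h
    simp only [coe_sigma, Set.mem_sigma_iff, mem_coe, id] at h
    simp [insert_erase h.2]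

theorem sum_card_compl_eq_sum_card_add_sum_card_sdiff (s t : ℕ) :
    ∑ S ∈ powersetCard s univ with #(S ∩ M) ≤ t, #Sᶜ =
      ∑ S ∈ powersetCard (s + 1) univ with #(S ∩ M) ≤ t, #S +
        ∑ S ∈ powersetCard s univ with #(S ∩ M) = t, #(M \ S) := by
  rw [← card_sigma, ← card_sigma _ (fun S => S), ← card_sigma _ (fun S => M \ S),
    ← card_filter_add_card_filter_not (p := fun x => x.2 ∈ M ∧ #(x.1 ∩ M) = t), add_comm,
    card_sigma_compl_filter_eq_card_sigma]
  congr 2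
  ext ⟨S, j⟩
  simp only [mem_filter, mem_sigma, mem_powersetCard_univ, mem_compl, mem_sdiff]
  constructor
  · rintro ⟨⟨⟨hS, -⟩, hj⟩, hjM, hSM⟩
    exact ⟨⟨hS, hSM⟩, hjM, hj⟩
  · rintro ⟨⟨hS, hSM⟩, hjM, hj⟩
    exact ⟨⟨⟨hS, hSM.le⟩, hj⟩, hjM, hSM⟩

theorem card_filter_inter_le_mul_card_sub (s t : ℕ) :
    #{S ∈ powersetCard s univ | #(S ∩ M) ≤ t} * (Fintype.card α - s) =
      #{S ∈ powersetCard (s + 1) univ | #(S ∩ M) ≤ t} * (s + 1) +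
        #{S ∈ powersetCard s univ | #(S ∩ M) = t} * (#M - t) := by
  have key := sum_card_compl_eq_sum_card_add_sum_card_sdiff M s t
  rwa [sum_const_nat, sum_const_nat, sum_const_nat] at key
  · intro S hS
    rw [card_sdiff, (mem_filter.mp hS).2]
  · intro S hS
    exact (mem_powersetCard_univ.mp (mem_filter.mp hS).1)
  · intro S hS
    rw [card_compl, (mem_powersetCard_univ.mp (mem_filter.mp hS).1)]

theorem sum_card_filter_inter_eq_div_choose {t : ℕ} (ht : t < #M) :
    ∑ s ∈ range (Fintype.card α), (#{S ∈ powersetCard s univ | #(S ∩ M) = t} : ℝ) /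
        ((Fintype.card α - s : ℕ) * (Fintype.card α).choose s) = 1 / (#M - t : ℕ) := by
  set n := Fintype.card α
  -- `f s` is the proportion of `s`-sets meeting `M` in at most `t` points.
  set f : ℕ → ℝ := fun s => #{S ∈ powersetCard s univ | #(S ∩ M) ≤ t} / n.choose s
  have hmt : ((#M - t : ℕ) : ℝ) ≠ 0 := Nat.cast_ne_zero.mpr (by omega)
  have hterm : ∀ s ∈ range n, (#{S ∈ powersetCard s univ | #(S ∩ M) = t} : ℝ) /
      ((n - s : ℕ) * n.choose s) = (f s - f (s + 1)) / (#M - t : ℕ) := by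
    intro s hs
    have hsn := mem_range.mp hs
    have hchoose : (n.choose (s + 1) : ℝ) * (s + 1) = n.choose s * (n - s : ℕ) := by
      exact_mod_cast Nat.choose_succ_right_eq n s
    have hcount : (#{S ∈ powersetCard s univ | #(S ∩ M) ≤ t} : ℝ) * (n - s : ℕ) =
        #{S ∈ powersetCard (s + 1) univ | #(S ∩ M) ≤ t} * (s + 1) +
          #{S ∈ powersetCard s univ | #(S ∩ M) = t} * (#M - t : ℕ) := by
      exact_mod_cast card_filter_inter_le_mul_card_sub M s t
    have : (0 : ℝ) < n.choose s := by exact_mod_cast Nat.choose_pos hsn.le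
    have : (0 : ℝ) < n.choose (s + 1) := by exact_mod_cast Nat.choose_pos hsn
    have : (0 : ℝ) < (n - s : ℕ) := by exact_mod_cast Nat.sub_pos_of_lt hsn
    simp only [f]
    rw [div_sub_div _ _ (by positivity) (by positivity), div_div,
      div_eq_div_iff (by positivity) (by positivity)]
    linear_combination (-(n.choose s * n.choose (s + 1) : ℝ)) * hcount -
      (n.choose s * #{S ∈ powersetCard (s + 1) univ | #(S ∩ M) ≤ t} : ℝ) * hchoose
  have hf0 : f 0 = 1 := by simp [f, powersetCard_zero, filter_singleton]
  have hfn : f n = 0 := by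
    have : powersetCard n (univ : Finset α) = {univ} := by
      rw [← powersetCard_self, card_univ]
    simp [f, this, ht]
  rw [sum_congr rfl hterm, ← sum_div, sum_range_sub', hf0, hfn, sub_zero]

theorem sum_card_filter_inter_lt_div_choose {d : ℕ} (hd : d ≤ #M) :
    ∑ s ∈ range (Fintype.card α), (#{S ∈ powersetCard s univ | #(S ∩ M) < d} : ℝ) /
        ((Fintype.card α - s : ℕ) * (Fintype.card α).choose s) =
      ∑ t ∈ range d, (1 : ℝ) / (#M - t : ℕ) := by
  have hfiber : ∀ s, (#{S ∈ powersetCard s univ | #(S ∩ M) < d} : ℝ) =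
      ∑ t ∈ range d, (#{S ∈ powersetCard s univ | #(S ∩ M) = t} : ℝ) := by
    intro s
    rw [card_eq_sum_card_fiberwise (f := fun S => #(S ∩ M)) (t := range d)
      fun S hS => mem_range.mpr (mem_filter.mp hS).2]
    push_cast
    refine sum_congr rfl fun t ht => ?_
    rw [filter_filter]
    congr 2
    ext S
    simp only [mem_filter]
    have := mem_range.mp ht
    constructor
    · exact fun h => ⟨h.1, h.2.2⟩
    · exact fun h => ⟨h.1, h.2 ▸ this, h.2⟩
  simp_rw [hfiber, sum_div]
  rw [sum_comm]
  exact sum_congr rfl fun t ht =>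
    sum_card_filter_inter_eq_div_choose M ((mem_range.mp ht).trans_le hd)

end Combinatorics

theorem harm_eq_sum_range_one_div_sub (n : ℕ) :
    harm n = ∑ s ∈ range n, (1 : ℝ) / (n - s : ℕ) := by
  rw [harm, ← sum_range_reflect]
  refine sum_congr rfl fun s hs => ?_
  have := mem_range.mp hs
  congr 1
  exact_mod_cast (by omega : n - 1 - s + 1 = n - s)

section Coordinates

variable {R κ : Type*} [Semiring R] [DecidableEq κ] (P : κ → Prop)

theorem funLeft_val_single_of_not {j : κ} (hj : ¬ P j) :
    LinearMap.funLeft R R (Subtype.val : {i // P i} → κ) (Pi.single j 1) = 0 := by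
  funext i
  have hij : (i : κ) ≠ j := fun h => hj (h ▸ i.2)
  simp [LinearMap.funLeft_apply, hij]

theorem linearIndependent_funLeft_val_single :
    LinearIndependent R (LinearMap.funLeft R R (Subtype.val : {i // P i} → κ) ∘
      fun i : {i // P i} => Pi.single (i : κ) 1) := by
  convert Pi.linearIndependent_single_one {i // P i} R with i
  funext j
  simp [LinearMap.funLeft_apply, Pi.single_apply, Subtype.ext_iff]

end Coordinates

section RetrievalTime

variable {F : Type*} [Field F] {k n : ℕ} (G : Matrix (Fin k) (Fin n) F)
  (V : Submodule F (Fin k → F))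

open Classical in
theorem alphaCount_eq_card_filter (s : ℕ) :
    alphaCount F G V s = #{S ∈ powersetCard s univ | V ≤ colSpan F G S} := by
  rw [alphaCount, Nat.card_eq_fintype_card, Fintype.card_subtype]
  congr 1
  ext S
  simp

open Classical in
theorem Etime_eq_sum_card_not_le_colSpan (hV : V ≠ ⊥) :
    Etime F G V = n * ∑ s ∈ range n,
      (#{S ∈ powersetCard s univ | ¬ V ≤ colSpan F G S} : ℝ) /
        ((n - s : ℕ) * n.choose s) := by
  have hα0 : alphaCount F G V 0 = 0 := by
    simp [alphaCount_eq_card_filter, powersetCard_zero, filter_singleton, colSpan, hV]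
  have hIcc : Icc 1 (n - 1) = Ico 1 n := by ext; simp only [mem_Icc, mem_Ico]; omega
  have hsum : ∑ s ∈ Icc 1 (n - 1), (alphaCount F G V s : ℝ) / ((n - 1).choose s) =
      ∑ s ∈ range n, (alphaCount F G V s : ℝ) / ((n - 1).choose s) := by
    rw [hIcc]
    refine sum_subset (fun s hs => mem_range.mpr (mem_Ico.mp hs).2) fun s hs hs' => ?_
    have : s = 0 := by simp only [mem_range, mem_Ico] at hs hs'; omega
    simp [this, hα0]
  rw [Etime, hsum, harm_eq_sum_range_one_div_sub, mul_sum, mul_sum, ← sum_sub_distrib]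
  refine sum_congr rfl fun s hs => ?_
  have hsn := mem_range.mp hs
  have hsplit : (alphaCount F G V s : ℝ) +
      #{S ∈ powersetCard s univ | ¬ V ≤ colSpan F G S} = n.choose s := by
    rw [alphaCount_eq_card_filter]
    exact_mod_cast (card_filter_add_card_filter_not _).trans (by simp)
  have hchoose : ((n - 1).choose s : ℝ) * n = n.choose s * (n - s : ℕ) := by
    have := Nat.choose_mul_succ_eq (n - 1) s
    rw [Nat.sub_add_cancel (by omega : 1 ≤ n)] at this
    exact_mod_cast this
  have : (0 : ℝ) < n.choose s := by exact_mod_cast Nat.choose_pos hsn.le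
  have : (0 : ℝ) < (n - 1).choose s := by exact_mod_cast Nat.choose_pos (by omega)
  have : (0 : ℝ) < (n - s : ℕ) := by exact_mod_cast Nat.sub_pos_of_lt hsn
  field_simp
  linear_combination (alphaCount F G V s : ℝ) * hchoose -
    (n * (n - 1).choose s : ℝ) * hsplit

theorem mul_div_card_le_Etime {M : Finset (Fin n)} {d : ℕ} (hd : 0 < d) (hdM : d ≤ #M)
    (hM : ∀ S, V ≤ colSpan F G S → d ≤ #(S ∩ M)) :
    n * d / #M ≤ Etime F G V := by
  have hV0 : V ≠ ⊥ := by
    rintro rfl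
    simpa using (hM ∅ bot_le).trans_lt' hd
  have hcomb := sum_card_filter_inter_lt_div_choose M hdM
  rw [Fintype.card_fin] at hcomb
  rw [Etime_eq_sum_card_not_le_colSpan G V hV0, mul_div_assoc]
  gcongr
  calc (d : ℝ) / #M = ∑ t ∈ range d, (1 : ℝ) / #M := by simp [div_eq_mul_inv]
    _ ≤ ∑ t ∈ range d, (1 : ℝ) / (#M - t : ℕ) := by
      refine sum_le_sum fun t ht => ?_
      have := mem_range.mp ht
      gcongr
      · exact_mod_cast Nat.sub_pos_of_lt (this.trans_le hdM)
      · exact_mod_cast Nat.sub_le _ _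
    _ = _ := hcomb.symm
    _ ≤ _ := by
      refine sum_le_sum fun s hs => ?_
      gcongr with S
      exact fun hlt hle => (hM S hle).not_gt hlt

variable {G} {ι E : Type*} [Fintype ι] [AddCommGroup E] [Module F E]

open Classical in
theorem card_le_card_filter_of_mem_colSpan {W : Submodule F (Fin k → F)}
    (p : (Fin k → F) →ₗ[F] E) (hW : W ≤ LinearMap.ker p) {v : ι → Fin k → F}
    (hv : LinearIndependent F (p ∘ v)) {S : Finset (Fin n)} (hvS : ∀ i, v i ∈ colSpan F G S) :
    Fintype.card ι ≤ #{j ∈ S | (fun i => G i j) ∉ W} := by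
  set T := {j ∈ S | (fun i => G i j) ∉ W}
  have hspan : ∀ i, p (v i) ∈ Submodule.span F ↑(T.image fun j => p fun i => G i j) := by
    intro i
    refine (?_ : (colSpan F G S).map p ≤ _) (Submodule.mem_map_of_mem (hvS i))
    rw [colSpan, Submodule.map_span, Submodule.span_le]
    rintro _ ⟨_, ⟨j, hj, rfl⟩, rfl⟩
    by_cases hjW : (fun i => G i j) ∈ W
    · rw [LinearMap.mem_ker.mp (hW hjW)]
      exact zero_mem _
    · exact Submodule.subset_span (mem_coe.mpr (mem_image_of_mem _ (mem_filter.mpr ⟨hj, hjW⟩)))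
  calc Fintype.card ι ≤ Fintype.card ↑(T.image fun j => p fun i => G i j : Set E) :=
        linearIndependent_le_span_aux' _ hv _ (Set.range_subset_iff.mpr hspan)
    _ ≤ #T := by simpa only [coe_sort_coe, Fintype.card_coe] using card_image_le

theorem card_div_Etime_le {W : Submodule F (Fin k → F)} (hV : V ≤ colSpan F G univ)
    (p : (Fin k → F) →ₗ[F] E) (hW : W ≤ LinearMap.ker p) {v : ι → Fin k → F}
    (hv : LinearIndependent F (p ∘ v)) (hvV : ∀ i, v i ∈ V) :
    (Fintype.card ι : ℝ) / Etime F G V ≤ 1 - Ncount F G W / n := by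
  classical
  set M : Finset (Fin n) := {j | (fun i => G i j) ∉ W}
  have hNM : (Ncount F G W : ℝ) + #M = n := by
    rw [Ncount, Nat.card_eq_fintype_card, Fintype.card_subtype]
    exact_mod_cast (card_filter_add_card_filter_not _).trans (by simp)
  have hcount : ∀ S, V ≤ colSpan F G S → Fintype.card ι ≤ #(S ∩ M) := fun S hS => by
    simpa [M, inter_filter] using
      card_le_card_filter_of_mem_colSpan p hW hv fun i => hS (hvV i)
  rcases (Fintype.card ι).eq_zero_or_pos with hd | hd
  · rw [hd, Nat.cast_zero, zero_div, sub_nonneg]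
    exact div_le_one_of_le₀ (by linarith [(#M).cast_nonneg (α := ℝ)]) n.cast_nonneg
  · have hdM : Fintype.card ι ≤ #M := by simpa using hcount univ hV
    have hM : (0 : ℝ) < #M := by exact_mod_cast hd.trans_le hdM
    have hn : (0 : ℝ) < n := by linarith [(Ncount F G W).cast_nonneg (α := ℝ)]
    calc (Fintype.card ι : ℝ) / Etime F G V
        ≤ Fintype.card ι / (n * Fintype.card ι / #M) := by
          gcongr
          exact mul_div_card_le_Etime G V hd hdM hcount
      _ = 1 - Ncount F G W / n := by
          field_simp
          linarith

theorem colSpan_univ_eq_top (hG : G.rank = k) : colSpan F G univ = ⊤ := by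
  refine Submodule.eq_top_of_finrank_eq ?_
  rw [Module.finrank_fin_fun, colSpan, coe_univ, Set.image_univ]
  exact G.rank_eq_finrank_span_cols.symm.trans hG

theorem card_div_Etime_span_single_le (hG : colSpan F G univ = ⊤) (P Q : Fin k → Prop)
    [DecidablePred P] (hPQ : ∀ i, Q i → ¬ P i) :
    (Fintype.card {i // P i} : ℝ) /
        Etime F G (Submodule.span F {v | ∃ i, P i ∧ v = Pi.single i 1}) ≤
      1 - Ncount F G (Submodule.span F {v | ∃ i, Q i ∧ v = Pi.single i 1}) / n := by
  refine card_div_Etime_le _ (hG ▸ le_top) _ ?_ (linearIndependent_funLeft_val_single P)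
    fun i => Submodule.subset_span ⟨i, i.2, rfl⟩
  rw [Submodule.span_le]
  rintro _ ⟨j, hj, rfl⟩
  exact funLeft_val_single_of_not P (hPQ j hj)

end RetrievalTime

theorem stmt9_general (k n s1 s2 : ℕ)
    (F : Type*) [Field F]
    (G : Matrix (Fin k) (Fin n) F) (hrank : G.rank = k)
    (hk : s1 + s2 = k) :
    (s1 : ℝ) / Etime F G (file1 F k s1) + (s2 : ℝ) / Etime F G (file2 F k s1) ≤
      2 - ((Ncount F G (file1 F k s1) + Ncount F G (file2 F k s1) : ℕ) : ℝ) / (n : ℝ) := by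
  have hG := colSpan_univ_eq_top hrank
  have h1 := card_div_Etime_span_single_le hG (fun i : Fin k => (i : ℕ) < s1) (fun i => s1 ≤ i)
    (fun _ => Nat.not_lt.mpr)
  have h2 := card_div_Etime_span_single_le hG (fun i : Fin k => s1 ≤ (i : ℕ)) (fun i => i < s1)
    (fun _ => Nat.not_le.mpr)
  have hcard1 : Fintype.card {i : Fin k // (i : ℕ) < s1} = s1 := by
    rw [Fintype.card_subtype, Fin.card_filter_val_lt, min_eq_right (by omega)]
  have hcard2 : Fintype.card {i : Fin k // s1 ≤ (i : ℕ)} = s2 := by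
    rw [Fintype.card_congr (Equiv.subtypeEquivRight fun i : Fin k => Nat.not_lt.symm),
      Fintype.card_subtype_compl, Fintype.card_fin, hcard1]
    omega
  rw [hcard1] at h1
  rw [hcard2] at h2
  rw [Nat.cast_add, add_div]
  unfold file1 file2
  linarith

/-- The nonlinear geometric bound:
`s₁/E₁(G) + s₂/E₂(G) ≤ 2 − (N(F₁) + N(F₂))/n`. -/
theorem stmt9 (q k n s1 s2 : ℕ) (hq : IsPrimePow q)
    (F : Type*) [Field F] [Fintype F] (hF : Fintype.card F = q)
    (G : Matrix (Fin k) (Fin n) F) (hrank : G.rank = k)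
    (hs1 : 1 ≤ s1) (hs2 : 1 ≤ s2) (hk : s1 + s2 = k) :
    (s1 : ℝ) / Etime F G (file1 F k s1) + (s2 : ℝ) / Etime F G (file2 F k s1) ≤
      2 - ((Ncount F G (file1 F k s1) + Ncount F G (file2 F k s1) : ℕ) : ℝ) / (n : ℝ) :=
  stmt9_general k n s1 s2 F G hrank hk
end

section
/- Let q be a prime power, let k ≤ n, let s_1, s_2 ≥ 1 with s_1 + s_2 = k, and let G = [I_k | P] ∈ F_q^{k×n} be a systematic matrix in which every k columns are linearly independent (a systematic [n,k] MDS code). Then for each i ∈ {1,2}: α_{F_i}(s) = 0 for s < s_i; α_{F_i}(s) = C(n−s_i, s−s_i) for s_i ≤ s ≤ k−1; and α_{F_i}(s) = C(n,s) for s ≥ k. -/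
open Finset

open Matrix

/-! In an `[n,k]` MDS code every set of at most `k` columns is linearly independent. Hence,
for a set `S` of fewer than `k` columns, no column outside `S` lies in the span of `S`, and that
span contains the span of another column set `T` exactly when `T ⊆ S`; any `k` columns span
the whole space. In a systematic code `F_i` is the span of `s_i` identity columns, so for
`s < k` the sets counted by `α_{F_i}(s)` are exactly the `s`-element supersets of them. -/

theorem span_image_le_span_image_iff {R M ι : Type*} [Semiring R] [AddCommMonoid M]
    [Module R M] {v : ι → M} {S T : Set ι}
    (hS : ∀ j ∉ S, v j ∉ Submodule.span R (v '' S)) :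
    Submodule.span R (v '' T) ≤ Submodule.span R (v '' S) ↔ T ⊆ S := by
  refine ⟨fun h j hjT => ?_, fun h => Submodule.span_mono (Set.image_mono h)⟩
  by_contra hjS
  exact hS j hjS (h (Submodule.subset_span (Set.mem_image_of_mem v hjT)))

theorem Fin.card_filter_le_val {k : ℕ} (s : ℕ) : #{i : Fin k | s ≤ (i : ℕ)} = k - s := by
  have h := card_filter_add_card_filter_not (s := univ) fun i : Fin k => (i : ℕ) < s
  simp only [not_lt, Fin.card_filter_val_lt, card_univ, Fintype.card_fin] at h
  omega

section IndependentSubsets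

variable {K M ι : Type*} [DivisionRing K] [AddCommGroup M] [Module K M] {v : ι → M} {k : ℕ}

theorem linearIndepOn_of_card_le [Fintype ι]
    (hv : ∀ S : Finset ι, #S = k → LinearIndepOn K v S) (hk : k ≤ Fintype.card ι)
    {S : Finset ι} (hS : #S ≤ k) : LinearIndepOn K v S := by
  obtain ⟨T, hST, -, hT⟩ := exists_subsuperset_card_eq S.subset_univ hS (by simpa using hk)
  exact (hv T hT).mono (by exact_mod_cast hST)

theorem notMem_span_image_of_card_lt [Fintype ι] [DecidableEq ι]
    (hv : ∀ S : Finset ι, #S = k → LinearIndepOn K v S) (hk : k ≤ Fintype.card ι)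
    {S : Finset ι} (hS : #S < k) {j : ι} (hj : j ∉ S) :
    v j ∉ Submodule.span K (v '' S) := by
  have hind : LinearIndepOn K v (insert j S : Finset ι) :=
    linearIndepOn_of_card_le hv hk (by rw [card_insert_of_notMem hj]; omega)
  rw [coe_insert, linearIndepOn_insert (by simpa)] at hind
  exact hind.2

theorem span_image_eq_top_of_card_le [FiniteDimensional K M]
    (hv : ∀ S : Finset ι, #S = k → LinearIndepOn K v S) (hk : Module.finrank K M = k)
    {S : Finset ι} (hS : k ≤ #S) : Submodule.span K (v '' S) = ⊤ := by
  obtain ⟨T, hTS, hT⟩ := exists_subset_card_eq hS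
  have hspan : Submodule.span K (v '' T) = ⊤ := by
    rw [Set.image_eq_range]
    exact (hv T hT).span_eq_top_of_card_eq_finrank' (by simp [hT, hk])
  exact top_unique (hspan ▸ Submodule.span_mono (Set.image_mono (by exact_mod_cast hTS)))

end IndependentSubsets

section SystematicMDS

variable {F : Type*} [Field F] {k n : ℕ} (G : Matrix (Fin k) (Fin n) F)

theorem alphaCount_eq_card_filter_s15 {V : Submodule F (Fin k → F)} {s : ℕ}
    (P : Finset (Fin n) → Prop) [DecidablePred P]
    (hP : ∀ S : Finset (Fin n), #S = s → (V ≤ colSpan F G S ↔ P S)) :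
    alphaCount F G V s = #{S ∈ univ.powersetCard s | P S} := by
  rw [alphaCount, ← Nat.card_eq_finsetCard]
  exact Nat.card_congr <| Equiv.subtypeEquivRight fun S => by
    simp only [mem_filter, mem_powersetCard, subset_univ, true_and]
    exact and_congr_right (hP S)

theorem alphaCount_of_le (hMDS : ∀ S : Finset (Fin n), #S = k → LinearIndepOn F Gᵀ S)
    (V : Submodule F (Fin k → F)) {s : ℕ} (hs : k ≤ s) :
    alphaCount F G V s = n.choose s := by
  rw [alphaCount_eq_card_filter_s15 G (fun _ => True) fun S hS => ?_]
  · simp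
  · simp only [iff_true]
    exact le_top.trans_eq (span_image_eq_top_of_card_le hMDS (by simp) (hS ▸ hs)).symm

theorem alphaCount_colSpan_of_lt (hkn : k ≤ n)
    (hMDS : ∀ S : Finset (Fin n), #S = k → LinearIndepOn F Gᵀ S)
    (T : Finset (Fin n)) {s : ℕ} (hs : s < k) :
    alphaCount F G (colSpan F G T) s = #{S ∈ univ.powersetCard s | T ⊆ S} :=
  alphaCount_eq_card_filter_s15 G _ fun S hS => (span_image_le_span_image_iff fun _ hj =>
    notMem_span_image_of_card_lt hMDS (by simpa using hkn) (hS ▸ hs) hj).trans coe_subset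

theorem alphaCount_colSpan (hkn : k ≤ n) (hk : 0 < k)
    (hMDS : ∀ S : Finset (Fin n), #S = k → LinearIndepOn F Gᵀ S)
    {T : Finset (Fin n)} {t : ℕ} (hT : #T = t) (htk : t ≤ k) :
    (∀ s : ℕ, s < t → alphaCount F G (colSpan F G T) s = 0) ∧
    (∀ s : ℕ, t ≤ s → s ≤ k - 1 →
      alphaCount F G (colSpan F G T) s = (n - t).choose (s - t)) ∧
    (∀ s : ℕ, k ≤ s → alphaCount F G (colSpan F G T) s = n.choose s) := by
  refine ⟨fun s hs => ?_, fun s hts hsk => ?_, fun s hs => alphaCount_of_le G hMDS _ hs⟩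
  · rw [alphaCount_colSpan_of_lt G hkn hMDS T (by omega), card_eq_zero, filter_eq_empty_iff]
    intro S hS hTS
    have := card_le_card hTS
    rw [mem_powersetCard] at hS
    omega
  · rw [alphaCount_colSpan_of_lt G hkn hMDS T (by omega),
      card_filter_powersetCard_subset T univ s (subset_univ T) (hT ▸ hts), card_univ,
      Fintype.card_fin, hT]

theorem transpose_castLE_eq_single (hkn : k ≤ n)
    (hsys : ∀ (i : Fin k) (j : Fin n), (j : ℕ) < k →
      G i j = if (i : ℕ) = (j : ℕ) then 1 else 0)
    (i : Fin k) : Gᵀ (Fin.castLE hkn i) = Pi.single i 1 := by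
  ext i'
  rw [transpose_apply, hsys i' (Fin.castLE hkn i) i.2, Pi.single_apply]
  simp [Fin.ext_iff]

theorem span_single_eq_colSpan (hkn : k ≤ n)
    (hsys : ∀ (i : Fin k) (j : Fin n), (j : ℕ) < k →
      G i j = if (i : ℕ) = (j : ℕ) then 1 else 0)
    (p : Fin k → Prop) [DecidablePred p] :
    Submodule.span F {v : Fin k → F | ∃ i : Fin k, p i ∧ v = Pi.single i 1} =
      colSpan F G ((univ.filter p).map (Fin.castLEEmb hkn)) := by
  rw [colSpan]
  congr 1
  ext v
  constructor
  · rintro ⟨i, hi, rfl⟩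
    exact ⟨Fin.castLE hkn i, mem_map_of_mem _ (mem_filter.mpr ⟨mem_univ i, hi⟩),
      transpose_castLE_eq_single G hkn hsys i⟩
  · rintro ⟨j, hj, rfl⟩
    obtain ⟨i, hi, rfl⟩ := mem_map.mp hj
    exact ⟨i, (mem_filter.mp hi).2, transpose_castLE_eq_single G hkn hsys i⟩

end SystematicMDS

theorem stmt15_general (k n s1 s2 : ℕ)
    (F : Type*) [Field F]
    (hkn : k ≤ n) (hs1 : 1 ≤ s1) (hk : s1 + s2 = k)
    (G : Matrix (Fin k) (Fin n) F)
    (hsys : ∀ (i : Fin k) (j : Fin n), (j : ℕ) < k →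
      G i j = if (i : ℕ) = (j : ℕ) then 1 else 0)
    (hMDS : ∀ S : Finset (Fin n), S.card = k →
      LinearIndependent F (fun j : {x : Fin n // x ∈ S} => fun i => G i j.1)) :
    (∀ s : ℕ, s < s1 → alphaCount F G (file1 F k s1) s = 0) ∧
    (∀ s : ℕ, s1 ≤ s → s ≤ k - 1 →
      alphaCount F G (file1 F k s1) s = (n - s1).choose (s - s1)) ∧
    (∀ s : ℕ, k ≤ s → alphaCount F G (file1 F k s1) s = n.choose s) ∧
    (∀ s : ℕ, s < s2 → alphaCount F G (file2 F k s1) s = 0) ∧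
    (∀ s : ℕ, s2 ≤ s → s ≤ k - 1 →
      alphaCount F G (file2 F k s1) s = (n - s2).choose (s - s2)) ∧
    (∀ s : ℕ, k ≤ s → alphaCount F G (file2 F k s1) s = n.choose s) := by
  have hk0 : 0 < k := hk ▸ Nat.add_pos_left hs1 s2
  obtain ⟨h1, h2, h3⟩ := alphaCount_colSpan G hkn hk0 hMDS
    (T := (univ.filter fun i : Fin k => (i : ℕ) < s1).map (Fin.castLEEmb hkn))
    (by rw [card_map, Fin.card_filter_val_lt]; omega) (by omega : s1 ≤ k)
  obtain ⟨h4, h5, h6⟩ := alphaCount_colSpan G hkn hk0 hMDS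
    (T := (univ.filter fun i : Fin k => s1 ≤ (i : ℕ)).map (Fin.castLEEmb hkn))
    (by rw [card_map, Fin.card_filter_le_val]; omega) (by omega : s2 ≤ k)
  rw [← span_single_eq_colSpan G hkn hsys] at h1 h2 h3 h4 h5 h6
  exact ⟨h1, h2, h3, h4, h5, h6⟩

/-- Subset counts of a systematic `[n,k]` MDS code `G = [I_k | P]`:
`α_{F_i}(s) = 0` for `s < s_i`, `α_{F_i}(s) = C(n−s_i, s−s_i)` for `s_i ≤ s ≤ k−1`,
and `α_{F_i}(s) = C(n,s)` for `s ≥ k`. -/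
theorem stmt15 (q k n s1 s2 : ℕ) (hq : IsPrimePow q)
    (F : Type*) [Field F] [Fintype F] (hF : Fintype.card F = q)
    (hkn : k ≤ n) (hs1 : 1 ≤ s1) (hs2 : 1 ≤ s2) (hk : s1 + s2 = k)
    (G : Matrix (Fin k) (Fin n) F)
    (hsys : ∀ (i : Fin k) (j : Fin n), (j : ℕ) < k →
      G i j = if (i : ℕ) = (j : ℕ) then 1 else 0)
    (hMDS : ∀ S : Finset (Fin n), S.card = k →
      LinearIndependent F (fun j : {x : Fin n // x ∈ S} => fun i => G i j.1)) :
    (∀ s : ℕ, s < s1 → alphaCount F G (file1 F k s1) s = 0) ∧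
    (∀ s : ℕ, s1 ≤ s → s ≤ k - 1 →
      alphaCount F G (file1 F k s1) s = (n - s1).choose (s - s1)) ∧
    (∀ s : ℕ, k ≤ s → alphaCount F G (file1 F k s1) s = n.choose s) ∧
    (∀ s : ℕ, s < s2 → alphaCount F G (file2 F k s1) s = 0) ∧
    (∀ s : ℕ, s2 ≤ s → s ≤ k - 1 →
      alphaCount F G (file2 F k s1) s = (n - s2).choose (s - s2)) ∧
    (∀ s : ℕ, k ≤ s → alphaCount F G (file2 F k s1) s = n.choose s) :=
  stmt15_general k n s1 s2 F hkn hs1 hk G hsys hMDS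
end
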